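/- Under the Dawid-Skene model with known confusion matrices (all entries positive), the maximum likelihood label estimator ŷ_j = argmax_{g∈[k]} Π_{i,h} (π_{gh}^{(i)})^{1{X_{ij}=h}} satisfies, for each item j with true label y_j, P(ŷ_j ≠ y_j) ≤ (k-1)·exp(-m·I(π)), where I(π) = min_{g≠h} C(π_{g*},π_{h*}) and C(π_{g*},π_{h*}) = -min_{0≤t≤1}(1/m)Σ_{i=1}^m log(Σ_{l=1}^k (π_{gl}^{(i)})^{1-t}(π_{hl}^{(i)})^t). -/

import Mathlib

open MeasureTheory ProbabilityTheory Finset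

/-!
Mislabelling the item as some `g ≠ a` forces the likelihood-ratio event
`∏ i, π a i (X i) ≤ ∏ i, π g i (X i)`. By independence its probability is the `π a`-mass of a
set of label vectors, on which `∏ π a ≤ (∏ π a) ^ (1 - t) * (∏ π g) ^ t` for every `t ≥ 0`.
Summing the right-hand side over all label vectors factorizes it into
`∏ i, ∑ l, π a i l ^ (1 - t) * π g i l ^ t = exp (m * chernoffLogMoment (π a) (π g) t)`.
Taking the minimizing `t ∈ [0, 1]` and a union bound over the `k - 1` wrong labels gives the claim.
-/

lemma le_rpow_one_sub_mul_rpow_of_le {x y t : ℝ} (hx : 0 < x) (hxy : x ≤ y) (ht : 0 ≤ t) :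
    x ≤ x ^ (1 - t) * y ^ t :=
  calc x = x ^ (1 - t) * x ^ t := by rw [← Real.rpow_add hx, sub_add_cancel, Real.rpow_one]
    _ ≤ x ^ (1 - t) * y ^ t := by gcongr

lemma sum_filter_prod_le_prod_sum_rpow {ι α : Type*} [Fintype ι] [DecidableEq ι] [Fintype α]
    {p q : ι → α → ℝ} (hp : ∀ i l, 0 < p i l) (hq : ∀ i l, 0 ≤ q i l) {t : ℝ} (ht : 0 ≤ t) :
    ∑ v ∈ univ.filter (fun v : ι → α => ∏ i, p i (v i) ≤ ∏ i, q i (v i)), ∏ i, p i (v i)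
      ≤ ∏ i, ∑ l, p i l ^ (1 - t) * q i l ^ t := by
  have hterm (v : ι → α) : 0 ≤ ∏ i, p i (v i) ^ (1 - t) * q i (v i) ^ t :=
    prod_nonneg fun i _ => mul_nonneg (Real.rpow_nonneg (hp i (v i)).le _)
      (Real.rpow_nonneg (hq i (v i)) _)
  calc ∑ v ∈ univ.filter (fun v : ι → α => ∏ i, p i (v i) ≤ ∏ i, q i (v i)), ∏ i, p i (v i)
      ≤ ∑ v ∈ univ.filter (fun v : ι → α => ∏ i, p i (v i) ≤ ∏ i, q i (v i)),
          ∏ i, p i (v i) ^ (1 - t) * q i (v i) ^ t := by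
        refine sum_le_sum fun v hv => ?_
        rw [prod_mul_distrib, Real.finsetProd_rpow _ _ (fun i _ => (hp i (v i)).le),
          Real.finsetProd_rpow _ _ (fun i _ => hq i (v i))]
        exact le_rpow_one_sub_mul_rpow_of_le (prod_pos fun i _ => hp i (v i))
          (mem_filter.mp hv).2 ht
    _ ≤ ∑ v : ι → α, ∏ i, p i (v i) ^ (1 - t) * q i (v i) ^ t :=
        sum_le_sum_of_subset_of_nonneg (filter_subset _ _) fun v _ _ => hterm v
    _ = ∏ i, ∑ l, p i l ^ (1 - t) * q i l ^ t := by
        rw [prod_univ_sum, Fintype.piFinset_univ]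

section Independence

variable {Ω ι α : Type*} [MeasurableSpace Ω] {μ : Measure Ω} [Fintype ι]

lemma ProbabilityTheory.iIndepFun.measure_forall_eq [MeasurableSpace α] [MeasurableSingletonClass α]
    {X : ι → Ω → α} (hX : iIndepFun X μ) (v : ι → α) :
    μ {ω | ∀ i, X i ω = v i} = ∏ i, μ {ω | X i ω = v i} := by
  have hcyl : {ω | ∀ i, X i ω = v i} = ⋂ i, X i ⁻¹' {v i} := by ext; simp
  rw [hcyl, hX.meas_iInter fun i => ⟨{v i}, measurableSet_singleton _, rfl⟩]
  rfl

variable (μ) in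
lemma measure_setOf_le_sum_measure_forall_eq [DecidableEq ι] [Fintype α]
    (X : ι → Ω → α) (P : (ι → α) → Prop) [DecidablePred P] :
    μ {ω | P fun i => X i ω} ≤ ∑ v ∈ univ.filter P, μ {ω | ∀ i, X i ω = v i} := by
  refine (measure_mono fun ω hω => ?_).trans (measure_biUnion_finset_le _ _)
  exact Set.mem_biUnion (mem_filter.mpr ⟨mem_univ _, hω⟩) fun i => rfl

lemma ProbabilityTheory.iIndepFun.measure_prod_le_prod_le [DecidableEq ι] [Fintype α]
    [MeasurableSpace α] [MeasurableSingletonClass α] {X : ι → Ω → α} (hX : iIndepFun X μ)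
    {p q : ι → α → ℝ} (hp : ∀ i l, 0 < p i l) (hq : ∀ i l, 0 ≤ q i l)
    (hdist : ∀ i l, μ {ω | X i ω = l} = ENNReal.ofReal (p i l)) {t : ℝ} (ht : 0 ≤ t) :
    μ {ω | ∏ i, p i (X i ω) ≤ ∏ i, q i (X i ω)}
      ≤ ENNReal.ofReal (∏ i, ∑ l, p i l ^ (1 - t) * q i l ^ t) := by
  calc μ {ω | ∏ i, p i (X i ω) ≤ ∏ i, q i (X i ω)}
      ≤ ∑ v ∈ univ.filter (fun v : ι → α => ∏ i, p i (v i) ≤ ∏ i, q i (v i)),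
          μ {ω | ∀ i, X i ω = v i} :=
        measure_setOf_le_sum_measure_forall_eq μ X _
    _ = ENNReal.ofReal (∑ v ∈ univ.filter (fun v : ι → α => ∏ i, p i (v i) ≤ ∏ i, q i (v i)),
          ∏ i, p i (v i)) := by
        rw [ENNReal.ofReal_sum_of_nonneg fun v _ => prod_nonneg fun i _ => (hp i (v i)).le]
        refine sum_congr rfl fun v _ => ?_
        rw [hX.measure_forall_eq, ENNReal.ofReal_prod_of_nonneg fun i _ => (hp i (v i)).le]
        exact prod_congr rfl fun i _ => hdist i (v i)
    _ ≤ ENNReal.ofReal (∏ i, ∑ l, p i l ^ (1 - t) * q i l ^ t) :=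
        ENNReal.ofReal_le_ofReal (sum_filter_prod_le_prod_sum_rpow hp hq ht)

variable (μ) in
lemma measure_setOf_ne_le_card_sub_one_mul [Fintype α] [DecidableEq α] {f : Ω → α}
    {a : α} (E : α → Set Ω) (hf : ∀ ω, f ω ≠ a → ∃ g, g ≠ a ∧ ω ∈ E g) {c : ℝ}
    (hE : ∀ g, g ≠ a → μ (E g) ≤ ENNReal.ofReal c) :
    μ {ω | f ω ≠ a} ≤ ENNReal.ofReal ((Fintype.card α - 1) * c) := by
  have hcard : ((Fintype.card α - 1 : ℕ) : ℝ) = Fintype.card α - 1 := by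
    rw [Nat.cast_sub (Fintype.card_pos_iff.mpr ⟨a⟩), Nat.cast_one]
  calc μ {ω | f ω ≠ a} ≤ μ (⋃ g ∈ univ.erase a, E g) := measure_mono fun ω hω => by
        obtain ⟨g, hg, hωg⟩ := hf ω hω
        exact Set.mem_biUnion (mem_erase.mpr ⟨hg, mem_univ g⟩) hωg
    _ ≤ ∑ g ∈ univ.erase a, μ (E g) := measure_biUnion_finset_le _ _
    _ ≤ ∑ g ∈ univ.erase a, ENNReal.ofReal c := sum_le_sum fun g hg => hE g (ne_of_mem_erase hg)
    _ = ENNReal.ofReal ((Fintype.card α - 1) * c) := by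
        rw [sum_const, card_erase_of_mem (mem_univ a), card_univ, nsmul_eq_mul, ← hcard,
          ENNReal.ofReal_mul (Nat.cast_nonneg _), ENNReal.ofReal_natCast]

end Independence

section ChernoffInformation

variable {m : ℕ} {α : Type*} [Fintype α] {p q : Fin m → α → ℝ}

/-- The paper's Chernoff information is `C(p, q) = -min_{t ∈ [0, 1]} chernoffLogMoment p q t`. -/
noncomputable def chernoffLogMoment (p q : Fin m → α → ℝ) (t : ℝ) : ℝ :=
  (1 / (m : ℝ)) * ∑ i, Real.log (∑ l, p i l ^ (1 - t) * q i l ^ t)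

variable [Nonempty α] (hp : ∀ i l, 0 < p i l) (hq : ∀ i l, 0 < q i l)
include hp hq

lemma sum_rpow_mul_rpow_pos (i : Fin m) (t : ℝ) : 0 < ∑ l, p i l ^ (1 - t) * q i l ^ t :=
  sum_pos (fun l _ => mul_pos (Real.rpow_pos_of_pos (hp i l) _) (Real.rpow_pos_of_pos (hq i l) _))
    univ_nonempty

lemma prod_sum_rpow_eq_exp_chernoffLogMoment (t : ℝ) :
    ∏ i, ∑ l, p i l ^ (1 - t) * q i l ^ t = Real.exp (m * chernoffLogMoment p q t) := by
  rcases Nat.eq_zero_or_pos m with rfl | hm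
  · simp
  · rw [chernoffLogMoment, ← mul_assoc, mul_one_div_cancel (by positivity), one_mul,
      Real.exp_sum]
    exact prod_congr rfl fun i _ => (Real.exp_log (sum_rpow_mul_rpow_pos hp hq i t)).symm

lemma continuous_chernoffLogMoment : Continuous (chernoffLogMoment p q) := by
  refine continuous_const.mul (continuous_finsetSum _ fun i _ => ?_)
  refine Continuous.log (continuous_finsetSum _ fun l _ => ?_)
    fun t => (sum_rpow_mul_rpow_pos hp hq i t).ne'
  exact (continuous_const.rpow (continuous_const.sub continuous_id) fun _ => .inl (hp i l).ne').mul
    (continuous_const.rpow continuous_id fun _ => .inl (hq i l).ne')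

lemma exists_chernoffLogMoment_eq_sInf :
    ∃ t ∈ Set.Icc (0 : ℝ) 1,
      chernoffLogMoment p q t = sInf (chernoffLogMoment p q '' Set.Icc 0 1) :=
  (isCompact_Icc.image (continuous_chernoffLogMoment hp hq)).sInf_mem
    ((Set.nonempty_Icc.mpr zero_le_one).image _)

end ChernoffInformation

theorem mle_error_bound_general (m k : ℕ)
    {Ω : Type*} [MeasurableSpace Ω] (μ : Measure Ω)
    (π : Fin k → Fin m → Fin k → ℝ)
    (hpos : ∀ g i l, 0 < π g i l)
    (X : Fin m → Ω → Fin k)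
    (hindep : iIndepFun X μ)
    (a : Fin k)
    (hdist : ∀ i l, μ {ω | X i ω = l} = ENNReal.ofReal (π a i l))
    (yhat : Ω → Fin k)
    (hyhat : ∀ ω, yhat ω ≠ a →
      ∃ g, g ≠ a ∧ ∏ i, π a i (X i ω) ≤ ∏ i, π g i (X i ω)) :
    (μ {ω | yhat ω ≠ a}).toReal ≤
      ((k : ℝ) - 1) * Real.exp (-(m : ℝ) *
        sInf {x : ℝ | ∃ g h : Fin k, g ≠ h ∧
          x = -sInf ((fun t : ℝ =>
              (1 / (m : ℝ)) * ∑ i, Real.log (∑ l, π g i l ^ (1 - t) * π h i l ^ t)) ''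
            Set.Icc (0 : ℝ) 1)}) := by
  have : Nonempty (Fin k) := ⟨a⟩
  set C : Fin k → Fin k → ℝ := fun g h => -sInf (chernoffLogMoment (π g) (π h) '' Set.Icc 0 1)
  change _ ≤ _ * Real.exp (-(m : ℝ) * sInf {x | ∃ g h : Fin k, g ≠ h ∧ x = C g h})
  set I := sInf {x | ∃ g h : Fin k, g ≠ h ∧ x = C g h}
  have hI (g h : Fin k) (hgh : g ≠ h) : I ≤ C g h :=
    csInf_le ((Set.finite_range fun gh : Fin k × Fin k => C gh.1 gh.2).subset
      (by rintro _ ⟨g, h, -, rfl⟩; exact ⟨(g, h), rfl⟩)).bddBelow ⟨g, h, hgh, rfl⟩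
  have hpair (g : Fin k) (hg : g ≠ a) : μ {ω | ∏ i, π a i (X i ω) ≤ ∏ i, π g i (X i ω)} ≤
      ENNReal.ofReal (Real.exp (-(m : ℝ) * I)) := by
    obtain ⟨t, ht, hmin⟩ := exists_chernoffLogMoment_eq_sInf (hpos a) (hpos g)
    calc _ ≤ ENNReal.ofReal (∏ i, ∑ l, π a i l ^ (1 - t) * π g i l ^ t) :=
          hindep.measure_prod_le_prod_le (hpos a) (fun i l => (hpos g i l).le) hdist ht.1
      _ = ENNReal.ofReal (Real.exp (m * chernoffLogMoment (π a) (π g) t)) := by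
          rw [prod_sum_rpow_eq_exp_chernoffLogMoment (hpos a) (hpos g)]
      _ ≤ ENNReal.ofReal (Real.exp (-(m : ℝ) * I)) := by
          rw [hmin, neg_mul, ← mul_neg]
          gcongr
          exact le_neg_of_le_neg (hI a g hg.symm)
  refine ENNReal.toReal_le_of_le_ofReal
    (mul_nonneg (sub_nonneg.mpr (Nat.one_le_cast.mpr a.pos)) (Real.exp_pos _).le) ?_
  simpa using measure_setOf_ne_le_card_sub_one_mul μ _ hyhat hpair

/-- Upper bound for the MLE under the Dawid–Skene model: if X_i are independent with
X_i ~ π_{a*}^{(i)} (true label a, all entries positive) and ŷ is a maximum-likelihood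
label (so that ŷ ≠ a only if some g ≠ a has likelihood at least that of a), then
P(ŷ ≠ a) ≤ (k-1) exp(-m I(π)), where I(π) = min_{g≠h} C(π_{g*},π_{h*}) and
C(π_{g*},π_{h*}) = -min_{t∈[0,1]} (1/m) Σ_i log Σ_l (π^{(i)}_{gl})^{1-t}(π^{(i)}_{hl})^t. -/
theorem mle_error_bound (m k : ℕ) (hk : 2 ≤ k)
    {Ω : Type*} [MeasurableSpace Ω] (μ : Measure Ω) [IsProbabilityMeasure μ]
    (π : Fin k → Fin m → Fin k → ℝ)
    (hpos : ∀ g i l, 0 < π g i l) (hsum : ∀ g i, ∑ l, π g i l = 1)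
    (X : Fin m → Ω → Fin k) (hmeas : ∀ i, Measurable (X i))
    (hindep : iIndepFun X μ)
    (a : Fin k)
    (hdist : ∀ i l, μ {ω | X i ω = l} = ENNReal.ofReal (π a i l))
    (yhat : Ω → Fin k)
    (hyhat : ∀ ω, yhat ω ≠ a →
      ∃ g, g ≠ a ∧ ∏ i, π a i (X i ω) ≤ ∏ i, π g i (X i ω)) :
    (μ {ω | yhat ω ≠ a}).toReal ≤
      ((k : ℝ) - 1) * Real.exp (-(m : ℝ) *
        sInf {x : ℝ | ∃ g h : Fin k, g ≠ h ∧
          x = -sInf ((fun t : ℝ =>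
              (1 / (m : ℝ)) * ∑ i, Real.log (∑ l, π g i l ^ (1 - t) * π h i l ^ t)) ''
            Set.Icc (0 : ℝ) 1)}) :=
  mle_error_bound_general m k μ π hpos X hindep a hdist yhat hyhat
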